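/- Let α ∈ ℂ and let φ, ψ : ℂ → ℂ be entire functions with φ nowhere vanishing, satisfying ψ''(x) = (2x − 2ψ(x)φ(x))·ψ(x), φ''(x) = (2x − 2ψ(x)φ(x))·φ(x), and φ'(x)ψ(x) − φ(x)ψ'(x) = 2α for all x ∈ ℂ. Set z := −ψφ and u₀ := φ'/φ, and for (x,t) ∈ ℂ² define the 2×2 matrices C(x,t) = [[t²/4 − z(x)/2 − x/2, −(φ(x)/2)(t − u₀(x))], [−(1/φ(x))((u₀(x) + t)z(x)/2 + α), −t²/4 + z(x)/2 + x/2]] and D(x,t) = [[−t/2, φ(x)], [z(x)/φ(x), t/2]]. Then the zero-curvature (compatibility) equation holds for all (x,t) ∈ ℂ²: ∂C/∂x − ∂D/∂t + C·D − D·C = 0. -/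

import Mathlib

/-- Matrix `C` of the isomonodromic system for Painlevé II with parameter `α`. -/
noncomputable def Cmat (α : ℂ) (φ z u : ℂ → ℂ) (x t : ℂ) : Matrix (Fin 2) (Fin 2) ℂ :=
  !![t ^ 2 / 4 - z x / 2 - x / 2, -(φ x / 2) * (t - u x);
     -(1 / φ x) * ((u x + t) * z x / 2 + α), -t ^ 2 / 4 + z x / 2 + x / 2]

/-- Matrix `D` of the isomonodromic system for Painlevé II with parameter `α`. -/
noncomputable def Dmat (φ z : ℂ → ℂ) (x t : ℂ) : Matrix (Fin 2) (Fin 2) ℂ :=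
  !![-t / 2, φ x;
     z x / φ x, t / 2]

/-!
In the variables `u = φ'/φ` and `z = -ψφ` the hypotheses become the first-order system
`φ' = u φ`, `u' = 2x + 2z - u²` (a Riccati equation, from `φ'' = (2x + 2z) φ`) and
`z' = 2uz + 2α` (from the Wronskian condition). Substituting these derivatives, the
zero-curvature equation is an algebraic identity, checked entry by entry.
-/

theorem hasDerivAt_logDeriv_of_deriv_deriv_eq {𝕜 : Type*} [NontriviallyNormedField 𝕜] {f : 𝕜 → 𝕜}
    {x q : 𝕜} (hf : DifferentiableAt 𝕜 f x) (hf' : DifferentiableAt 𝕜 (deriv f) x)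
    (hf'' : deriv (deriv f) x = q * f x) (hfx : f x ≠ 0) :
    HasDerivAt (logDeriv f) (q - logDeriv f x ^ 2) x := by
  refine (hf'.hasDerivAt.div hf.hasDerivAt hfx).congr_deriv ?_
  rw [hf'', logDeriv_apply]
  field_simp

theorem hasDerivAt_neg_mul_of_wronskian {𝕜 : Type*} [NontriviallyNormedField 𝕜] {f g : 𝕜 → 𝕜}
    {x w : 𝕜} (hf : DifferentiableAt 𝕜 f x) (hg : DifferentiableAt 𝕜 g x)
    (hW : deriv f x * g x - f x * deriv g x = w) (hfx : f x ≠ 0) :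
    HasDerivAt (fun y => -(g y * f y)) (2 * logDeriv f x * -(g x * f x) + w) x := by
  refine (hg.hasDerivAt.mul hf.hasDerivAt).neg.congr_deriv ?_
  rw [logDeriv_apply, ← hW]
  field_simp
  ring

theorem deriv_Dmat_snd (φ z : ℂ → ℂ) (x t : ℂ) :
    (Matrix.of fun i j : Fin 2 => deriv (fun s => Dmat φ z x s i j) t) =
      !![-1 / 2, 0; 0, 1 / 2] := by
  ext i j
  fin_cases i <;> fin_cases j <;> simp [Dmat, div_eq_mul_inv]

theorem deriv_Cmat_fst {α : ℂ} {φ z u : ℂ → ℂ} {x φ' z' u' : ℂ} (t : ℂ)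
    (hφ : HasDerivAt φ φ' x) (hz : HasDerivAt z z' x) (hu : HasDerivAt u u' x) (hφ0 : φ x ≠ 0) :
    (Matrix.of fun i j : Fin 2 => deriv (fun y => Cmat α φ z u y t i j) x) =
      !![-(z' + 1) / 2, -(φ' / 2) * (t - u x) + φ x / 2 * u';
        φ' / φ x ^ 2 * ((u x + t) * z x / 2 + α) - (u' * z x + (u x + t) * z') / (2 * φ x),
        (z' + 1) / 2] := by
  ext i j
  fin_cases i <;> fin_cases j <;>
    simp only [Cmat, Matrix.of_apply, Matrix.cons_val', Matrix.cons_val_zero, Matrix.cons_val_one,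
      Matrix.empty_val', Matrix.cons_val_fin_one, Fin.zero_eta, Fin.mk_one, Fin.isValue]
  · exact (((hasDerivAt_const x _).sub (hz.div_const 2)).sub
      ((hasDerivAt_id x).div_const 2)).deriv.trans (by ring)
  · exact ((hφ.div_const 2).neg.mul ((hasDerivAt_const x t).sub hu)).deriv.trans
      (by simp only [Pi.neg_apply, Pi.sub_apply]; ring)
  · exact (((hasDerivAt_const x (1 : ℂ)).div hφ hφ0).neg.mul
      ((((hu.add_const t).mul hz).div_const 2).add_const α)).deriv.trans
      (by simp only [Pi.neg_apply, Pi.div_apply, Pi.mul_apply]; field_simp; ring)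
  · exact (((hasDerivAt_const x _).add (hz.div_const 2)).add
      ((hasDerivAt_id x).div_const 2)).deriv.trans (by ring)

theorem zero_curvature_of_hasDerivAt {α : ℂ} {φ z u : ℂ → ℂ} {x : ℂ} (t : ℂ)
    (hφ : HasDerivAt φ (u x * φ x) x) (hz : HasDerivAt z (2 * u x * z x + 2 * α) x)
    (hu : HasDerivAt u (2 * x + 2 * z x - u x ^ 2) x) (hφ0 : φ x ≠ 0) :
    (Matrix.of fun i j : Fin 2 => deriv (fun y => Cmat α φ z u y t i j) x)
        - (Matrix.of fun i j : Fin 2 => deriv (fun s => Dmat φ z x s i j) t)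
        + Cmat α φ z u x t * Dmat φ z x t - Dmat φ z x t * Cmat α φ z u x t = 0 := by
  rw [deriv_Cmat_fst t hφ hz hu hφ0, deriv_Dmat_snd]
  ext i j
  fin_cases i <;> fin_cases j <;>
    simp only [Cmat, Dmat, Matrix.sub_apply, Matrix.add_apply, Matrix.mul_apply, Fin.sum_univ_two,
      Matrix.of_apply, Matrix.cons_val', Matrix.cons_val_zero, Matrix.cons_val_one,
      Matrix.empty_val', Matrix.cons_val_fin_one, Matrix.zero_apply, Fin.zero_eta, Fin.mk_one,
      Fin.isValue] <;>
    field_simp <;> ring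

theorem zero_curvature_CD_general
    (α : ℂ) (φ ψ : ℂ → ℂ) (hφ : Differentiable ℂ φ) (hψ : Differentiable ℂ ψ)
    (hφ0 : ∀ x : ℂ, φ x ≠ 0)
    (hφ'' : ∀ x : ℂ, deriv (deriv φ) x = (2 * x - 2 * ψ x * φ x) * φ x)
    (hW : ∀ x : ℂ, deriv φ x * ψ x - φ x * deriv ψ x = 2 * α)
    (z u : ℂ → ℂ)
    (hz : z = fun x => -(ψ x * φ x))
    (hu : u = fun x => deriv φ x / φ x) :
    ∀ x t : ℂ,
      (Matrix.of fun i j : Fin 2 => deriv (fun y => Cmat α φ z u y t i j) x)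
        - (Matrix.of fun i j : Fin 2 => deriv (fun s => Dmat φ z x s i j) t)
        + Cmat α φ z u x t * Dmat φ z x t - Dmat φ z x t * Cmat α φ z u x t = 0 := by
  intro x t
  have hu : u = logDeriv φ := hu
  subst hz hu
  refine zero_curvature_of_hasDerivAt t ?_ ?_ ?_ (hφ0 x)
  · exact (hφ x).hasDerivAt.congr_deriv (div_mul_cancel₀ _ (hφ0 x)).symm
  · exact hasDerivAt_neg_mul_of_wronskian (hφ x) (hψ x) (hW x) (hφ0 x)
  · exact (hasDerivAt_logDeriv_of_deriv_deriv_eq (hφ x) (hφ.deriv x) (hφ'' x)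
      (hφ0 x)).congr_deriv (by ring)

/-- **Theorem 2.7 (compatibility, part (ii)).** Under the conditions
`ψ''/ψ = φ''/φ = −2ψφ + 2x` and `φ'ψ − φψ' = 2α`, with `z = −ψφ` and `u₀ = φ'/φ`,
the matrices `C`, `D` satisfy the zero-curvature equation
`∂C/∂x − ∂D/∂t + [C, D] = 0`. -/
theorem zero_curvature_CD
    (α : ℂ) (φ ψ : ℂ → ℂ) (hφ : Differentiable ℂ φ) (hψ : Differentiable ℂ ψ)
    (hφ0 : ∀ x : ℂ, φ x ≠ 0)
    (hψ'' : ∀ x : ℂ, deriv (deriv ψ) x = (2 * x - 2 * ψ x * φ x) * ψ x)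
    (hφ'' : ∀ x : ℂ, deriv (deriv φ) x = (2 * x - 2 * ψ x * φ x) * φ x)
    (hW : ∀ x : ℂ, deriv φ x * ψ x - φ x * deriv ψ x = 2 * α)
    (z u : ℂ → ℂ)
    (hz : z = fun x => -(ψ x * φ x))
    (hu : u = fun x => deriv φ x / φ x) :
    ∀ x t : ℂ,
      (Matrix.of fun i j : Fin 2 => deriv (fun y => Cmat α φ z u y t i j) x)
        - (Matrix.of fun i j : Fin 2 => deriv (fun s => Dmat φ z x s i j) t)
        + Cmat α φ z u x t * Dmat φ z x t - Dmat φ z x t * Cmat α φ z u x t = 0 :=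
  zero_curvature_CD_general α φ ψ hφ hψ hφ0 hφ'' hW z u hz hu
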